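/- arXiv:1504.03924 — 2 statements merged into one kernel-verified Lean document; each statement's English description precedes it below -/
import Mathlib

section
/- Let M be a finite-dimensional module over the VW-algebra ⩔_d(Ξ) with generalized eigenspace decomposition M = ⊕ M_𝐢 for y₁,…,y_d, and set ψ_k = s_k(y_k - y_{k+1}) + 1. If 𝐢_k + 𝐢_{k+1} ≠ 0 then ψ_k M_𝐢 ⊆ M_{s_k 𝐢}, where s_k 𝐢 swaps entries k and k+1 of 𝐢. If moreover |𝐢_k - 𝐢_{k+1}| ≠ 1, then ψ_k restricts to a linear isomorphism M_𝐢 ≅ M_{s_k(𝐢)}. -/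
/-!
Write `Δ = y k - y (k+1)` and `ψ = s k Δ + 1`. The relations (VW.7) give
`y k ψ = ψ y (k+1) + e k Δ`, `y (k+1) ψ = ψ y k - e k Δ` and `ψ² = 1 - Δ² + 2 s k e k Δ`,
while `ψ` commutes with the other `y j`. On `M_𝐢` the operator `y k + y (k+1)` has the single
generalized eigenvalue `𝐢 k + 𝐢 (k+1) ≠ 0`, so it is onto, and `e k (y k + y (k+1)) = 0` forces
`e k = 0` there. Hence on `M_𝐢` the operator `ψ` intertwines `y k, y (k+1)` with `y (k+1), y k`,
which maps `M_𝐢` into `M_{s_k 𝐢}`, and `ψ² = 1 - Δ²`. On both `M_𝐢` and `M_{s_k 𝐢}` the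
operator `1 - Δ²` has the single generalized eigenvalue `1 - (𝐢 k - 𝐢 (k+1))² ≠ 0`, so it is
bijective there; this makes `ψ` injective on `M_𝐢` and onto `M_{s_k 𝐢}`.
-/

/-- The simultaneous generalized eigenspace `M_𝐢` for the commuting operators
`y 0, …, y (d-1)` with eigenvalue tuple `c`. -/
def simGenEigenspace {M : Type*} [AddCommGroup M] [Module ℂ M]
    (d : ℕ) (y : ℕ → Module.End ℂ M) (c : ℕ → ℂ) : Submodule ℂ M :=
  ⨅ j : Fin d, (y j).maxGenEigenspace (c j)

open Module Polynomial

namespace Module.End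

section CommRing
variable {R M : Type*} [CommRing R] [AddCommGroup M] [Module R M]

lemma maxGenEigenspace_inf_le_add {f g : End R M} (h : Commute f g) (μ ν : R) :
    f.maxGenEigenspace μ ⊓ g.maxGenEigenspace ν ≤ (f + g).maxGenEigenspace (μ + ν) :=
  genEigenspace_inf_le_add f g μ ν ⊤ ⊤ h

lemma maxGenEigenspace_inf_le_sub {f g : End R M} (h : Commute f g) (μ ν : R) :
    f.maxGenEigenspace μ ⊓ g.maxGenEigenspace ν ≤ (f - g).maxGenEigenspace (μ - ν) := by
  have hneg : g.maxGenEigenspace ν ≤ (-g).maxGenEigenspace (-ν) := by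
    simpa using genEigenspace_le_smul g ν (-1) ⊤
  simpa only [sub_eq_add_neg] using
    (inf_le_inf_left _ hneg).trans (maxGenEigenspace_inf_le_add h.neg_right μ (-ν))

lemma mem_maxGenEigenspace_aeval {f : End R M} {μ : R} {x : M} (p : R[X])
    (hx : x ∈ f.maxGenEigenspace μ) : x ∈ (aeval f p).maxGenEigenspace (p.eval μ) := by
  obtain ⟨n, hn⟩ := (mem_maxGenEigenspace f μ x).1 hx
  obtain ⟨q, hq⟩ : X - C μ ∣ p - C (p.eval μ) := dvd_iff_isRoot.2 (by simp)
  have hfactor : aeval f p - p.eval μ • 1 = aeval f q * (f - μ • 1) := by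
    rw [← Algebra.algebraMap_eq_smul_one, ← aeval_C f, ← map_sub, hq, mul_comm, map_mul]
    simp [Algebra.algebraMap_eq_smul_one]
  have hcomm : Commute (aeval f q) (f - μ • 1) := by
    have := (Commute.all q (X - C μ)).map (aeval f)
    rwa [map_sub, aeval_X, aeval_C, Algebra.algebraMap_eq_smul_one] at this
  refine (mem_maxGenEigenspace _ _ x).2 ⟨n, ?_⟩
  rw [hfactor, hcomm.mul_pow, mul_apply, hn, map_zero]

lemma apply_mem_maxGenEigenspace_of_intertwine {f g φ : End R M} {p : Submodule R M}
    (hp : Set.MapsTo g p p) (h : ∀ z ∈ p, f (φ z) = φ (g z)) {μ : R} {x : M} (hxp : x ∈ p)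
    (hx : x ∈ g.maxGenEigenspace μ) : φ x ∈ f.maxGenEigenspace μ := by
  have key : ∀ n, ∀ z ∈ p,
      ((f - μ • (1 : End R M)) ^ n) (φ z) = φ (((g - μ • (1 : End R M)) ^ n) z) := by
    intro n
    induction n with
    | zero => simp
    | succ n ih =>
      intro z hz
      have hgz : (g - μ • 1) z ∈ p := by simpa using p.sub_mem (hp hz) (p.smul_mem μ hz)
      have hstep : (f - μ • 1) (φ z) = φ ((g - μ • 1) z) := by simp [h z hz]
      rw [pow_succ, mul_apply, hstep, ih _ hgz, pow_succ, mul_apply]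
  obtain ⟨n, hn⟩ := (mem_maxGenEigenspace g μ x).1 hx
  exact (mem_maxGenEigenspace f μ _).2 ⟨n, by rw [key n x hxp, hn, map_zero]⟩

end CommRing

section Field
variable {K V : Type*} [Field K] [AddCommGroup V] [Module K V]

lemma eq_zero_of_mem_maxGenEigenspace_of_apply_eq_zero {f : End K V} {μ : K} (hμ : μ ≠ 0)
    {x : V} (hx : x ∈ f.maxGenEigenspace μ) (h0 : f x = 0) : x = 0 := by
  have hx0 : x ∈ f.maxGenEigenspace 0 :=
    eigenspace_le_maxGenEigenspace (by simpa [mem_eigenspace_iff] using h0)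
  exact Submodule.disjoint_def.1 (disjoint_genEigenspace f hμ ⊤ ⊤) x hx hx0

lemma exists_mem_apply_eq_of_mem_maxGenEigenspace {f : End K V} {μ : K} (hμ : μ ≠ 0)
    {p : Submodule K V} (hp : Set.MapsTo f p p) {x : V} (hxp : x ∈ p)
    (hx : x ∈ f.maxGenEigenspace μ) : ∃ u ∈ p, f u = x := by
  obtain ⟨n, hn⟩ := (mem_maxGenEigenspace f μ x).1 hx
  clear hx
  induction n generalizing x with
  | zero => exact ⟨0, p.zero_mem, by simpa using hn.symm⟩
  | succ n ih =>
    have hfx : (f - μ • 1) x ∈ p := by simpa using p.sub_mem (hp hxp) (p.smul_mem μ hxp)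
    -- `f u' = f x - μ x` gives `f (μ⁻¹ • (x - u')) = x`
    obtain ⟨u', hu'p, hu'⟩ := ih hfx (by rwa [← mul_apply, ← pow_succ])
    refine ⟨μ⁻¹ • (x - u'), p.smul_mem _ (p.sub_mem hxp hu'p), ?_⟩
    rw [map_smul, map_sub, hu']
    simp [smul_smul, hμ]

lemma apply_eq_zero_of_mul_eq_zero_of_mem_maxGenEigenspace {f E : End K V} {μ : K} (hμ : μ ≠ 0)
    (hE : E * f = 0) {x : V} (hx : x ∈ f.maxGenEigenspace μ) : E x = 0 := by
  obtain ⟨u, -, rfl⟩ :=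
    exists_mem_apply_eq_of_mem_maxGenEigenspace hμ (Set.mapsTo_univ f _) Submodule.mem_top hx
  rw [← mul_apply, hE, LinearMap.zero_apply]

end Field

end Module.End

open End

section simGenEigenspace

variable {M : Type*} [AddCommGroup M] [Module ℂ M] {d : ℕ} {y : ℕ → End ℂ M} {c : ℕ → ℂ}

lemma mem_simGenEigenspace {x : M} :
    x ∈ simGenEigenspace d y c ↔ ∀ j < d, x ∈ (y j).maxGenEigenspace (c j) := by
  simp only [simGenEigenspace, Submodule.mem_iInf, Fin.forall_iff]

lemma mapsTo_simGenEigenspace {g : End ℂ M} (hg : ∀ j < d, Commute (y j) g) :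
    Set.MapsTo g (simGenEigenspace d y c) (simGenEigenspace d y c) := fun _ hx =>
  mem_simGenEigenspace.2 fun j hj =>
    mapsTo_maxGenEigenspace_of_comm (hg j hj) _ (mem_simGenEigenspace.1 hx j hj)

lemma mem_maxGenEigenspace_one_sub_sq (hcomm : ∀ i j, i < d → j < d → Commute (y i) (y j))
    {i j : ℕ} (hi : i < d) (hj : j < d) {x : M} (hx : x ∈ simGenEigenspace d y c) :
    x ∈ (1 - (y i - y j) ^ 2).maxGenEigenspace (1 - (c i - c j) ^ 2) := by
  have hsub := maxGenEigenspace_inf_le_sub (hcomm i j hi hj) _ _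
    ⟨mem_simGenEigenspace.1 hx i hi, mem_simGenEigenspace.1 hx j hj⟩
  have h := mem_maxGenEigenspace_aeval (1 - X ^ 2 : ℂ[X]) hsub
  rwa [map_sub, map_one, map_pow, aeval_X, eval_sub, eval_one, eval_pow, eval_X] at h

lemma exists_mem_simGenEigenspace_one_sub_sq_apply_eq
    (hcomm : ∀ i j, i < d → j < d → Commute (y i) (y j)) {i j : ℕ} (hi : i < d) (hj : j < d)
    (hc : (c i - c j) ^ 2 ≠ 1) {x : M} (hx : x ∈ simGenEigenspace d y c) :
    ∃ u ∈ simGenEigenspace d y c, (1 - (y i - y j) ^ 2 : End ℂ M) u = x :=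
  exists_mem_apply_eq_of_mem_maxGenEigenspace (sub_ne_zero.2 (Ne.symm hc))
    (mapsTo_simGenEigenspace fun l hl => (Commute.one_right _).sub_right
      (((hcomm l i hl hi).sub_right (hcomm l j hl hj)).pow_right 2))
    hx (mem_maxGenEigenspace_one_sub_sq hcomm hi hj hx)

lemma eq_zero_of_one_sub_sq_apply_eq_zero
    (hcomm : ∀ i j, i < d → j < d → Commute (y i) (y j)) {i j : ℕ} (hi : i < d) (hj : j < d)
    (hc : (c i - c j) ^ 2 ≠ 1) {x : M} (hx : x ∈ simGenEigenspace d y c)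
    (h0 : (1 - (y i - y j) ^ 2 : End ℂ M) x = 0) : x = 0 :=
  eq_zero_of_mem_maxGenEigenspace_of_apply_eq_zero (sub_ne_zero.2 (Ne.symm hc))
    (mem_maxGenEigenspace_one_sub_sq hcomm hi hj hx) h0

end simGenEigenspace

namespace VW

section Ring

variable {A : Type*} [Ring A]

/-- `ψ_k` is `psi (s k) (y k) (y (k + 1))`. -/
def psi (s a b : A) : A := s * (a - b) + 1

variable {s a b e : A}

lemma mul_psi_eq_psi_mul_add (hab : Commute a b) (h : a * s - s * b = e - 1) :
    a * psi s a b = psi s a b * b + e * (a - b) := by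
  unfold psi
  linear_combination (norm := noncomm_ring) h * (a - b) - s * hab.eq

lemma mul_psi_eq_psi_mul_sub (hab : Commute a b) (h : s * a - b * s = e - 1) :
    b * psi s a b = psi s a b * a - e * (a - b) := by
  unfold psi
  linear_combination (norm := noncomm_ring) -h * (a - b) - s * hab.eq

lemma psi_mul_psi (hs : s * s = 1) (h : s * a - b * s = e - 1) (h' : a * s - s * b = e - 1) :
    psi s a b * psi s a b = 1 - (a - b) ^ 2 + 2 • (s * e * (a - b)) := by
  unfold psi
  linear_combination (norm := noncomm_ring) s * h' * (a - b) + s * h * (a - b) - hs * (a - b) ^ 2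

end Ring

section Module

variable {M : Type*} [AddCommGroup M] [Module ℂ M] {d : ℕ} {y : ℕ → End ℂ M} {c : ℕ → ℂ}
  {e s : End ℂ M} {k : ℕ}

lemma apply_sub_apply_eq_zero (hcomm : ∀ i j, i < d → j < d → Commute (y i) (y j))
    (hk : k + 1 < d) (he : e * (y k + y (k + 1)) = 0) (hc : c k + c (k + 1) ≠ 0) {x : M}
    (hx : x ∈ simGenEigenspace d y c) : e ((y k - y (k + 1)) x) = 0 := by
  have hk0 : k < d := by omega
  have hΔx : (y k - y (k + 1)) x ∈ simGenEigenspace d y c :=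
    mapsTo_simGenEigenspace (fun i hi => (hcomm i k hi hk0).sub_right (hcomm i (k + 1) hi hk)) hx
  exact apply_eq_zero_of_mul_eq_zero_of_mem_maxGenEigenspace hc he <|
    maxGenEigenspace_inf_le_add (hcomm k (k + 1) hk0 hk) _ _
      ⟨mem_simGenEigenspace.1 hΔx k hk0, mem_simGenEigenspace.1 hΔx (k + 1) hk⟩

lemma mapsTo_psi (hcomm : ∀ i j, i < d → j < d → Commute (y i) (y j)) (hk : k + 1 < d)
    (hsy : ∀ j < d, j ≠ k → j ≠ k + 1 → s * y j = y j * s)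
    (hvw7 : s * y k - y (k + 1) * s = e - 1) (hvw7' : y k * s - s * y (k + 1) = e - 1)
    (he : e * (y k + y (k + 1)) = 0) (hc : c k + c (k + 1) ≠ 0) :
    Set.MapsTo (psi s (y k) (y (k + 1)) : End ℂ M) (simGenEigenspace d y c)
      (simGenEigenspace d y (c ∘ Equiv.swap k (k + 1))) := by
  intro x hx
  have hk0 : k < d := by omega
  have hy : ∀ j < d, Set.MapsTo (y j) (simGenEigenspace d y c) (simGenEigenspace d y c) :=
    fun j hj => mapsTo_simGenEigenspace fun i hi => hcomm i j hi hj
  have heΔ : ∀ z ∈ simGenEigenspace d y c, e ((y k - y (k + 1)) z) = 0 := fun _ hz =>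
    apply_sub_apply_eq_zero hcomm hk he hc hz
  have hab := hcomm k (k + 1) hk0 hk
  have hψk : ∀ z ∈ simGenEigenspace d y c,
      y k (psi s (y k) (y (k + 1)) z) = psi s (y k) (y (k + 1)) (y (k + 1) z) := fun z hz => by
    have h := LinearMap.congr_fun (mul_psi_eq_psi_mul_add hab hvw7') z
    rwa [LinearMap.add_apply, mul_apply, mul_apply, mul_apply, heΔ z hz, add_zero] at h
  have hψk1 : ∀ z ∈ simGenEigenspace d y c,
      y (k + 1) (psi s (y k) (y (k + 1)) z) = psi s (y k) (y (k + 1)) (y k z) := fun z hz => by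
    have h := LinearMap.congr_fun (mul_psi_eq_psi_mul_sub hab hvw7) z
    rwa [LinearMap.sub_apply, mul_apply, mul_apply, mul_apply, heΔ z hz, sub_zero] at h
  refine mem_simGenEigenspace.2 fun j hj => ?_
  by_cases hjk : j = k
  · simpa [hjk] using apply_mem_maxGenEigenspace_of_intertwine (hy (k + 1) hk) hψk hx
      (mem_simGenEigenspace.1 hx _ hk)
  by_cases hjk1 : j = k + 1
  · simpa [hjk1] using apply_mem_maxGenEigenspace_of_intertwine (hy k hk0) hψk1 hx
      (mem_simGenEigenspace.1 hx _ hk0)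
  have hψ : Commute (y j) (psi s (y k) (y (k + 1))) :=
    ((show Commute s (y j) from hsy j hj hjk hjk1).symm.mul_right
      ((hcomm j k hj hk0).sub_right (hcomm j (k + 1) hj hk))).add_right (Commute.one_right _)
  simpa [Equiv.swap_apply_of_ne_of_ne hjk hjk1] using
    apply_mem_maxGenEigenspace_of_intertwine (hy j hj) (fun z _ => LinearMap.congr_fun hψ.eq z) hx
      (mem_simGenEigenspace.1 hx j hj)

lemma psi_psi_apply (hcomm : ∀ i j, i < d → j < d → Commute (y i) (y j)) (hk : k + 1 < d)
    (hs : s * s = 1) (hvw7 : s * y k - y (k + 1) * s = e - 1)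
    (hvw7' : y k * s - s * y (k + 1) = e - 1) (he : e * (y k + y (k + 1)) = 0)
    (hc : c k + c (k + 1) ≠ 0) {x : M} (hx : x ∈ simGenEigenspace d y c) :
    psi s (y k) (y (k + 1)) (psi s (y k) (y (k + 1)) x) =
      (1 - (y k - y (k + 1)) ^ 2 : End ℂ M) x := by
  have h := LinearMap.congr_fun (psi_mul_psi hs hvw7 hvw7') x
  rwa [mul_apply, LinearMap.add_apply, LinearMap.smul_apply, mul_apply, mul_apply,
    apply_sub_apply_eq_zero hcomm hk he hc hx, map_zero, smul_zero, add_zero] at h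

end Module

end VW

theorem statement4_general (M : Type*) [AddCommGroup M] [Module ℂ M]
    (d : ℕ) (y e s : ℕ → Module.End ℂ M)
    (hcomm : ∀ j j', j < d → j' < d → Commute (y j) (y j'))
    (hs2 : ∀ k, k + 1 < d → s k * s k = 1)
    (hsy : ∀ k j, k + 1 < d → j < d → j ≠ k → j ≠ k + 1 → s k * y j = y j * s k)
    (hvw7 : ∀ k, k + 1 < d → s k * y k - y (k+1) * s k = e k - 1)
    (hvw7' : ∀ k, k + 1 < d → y k * s k - s k * y (k+1) = e k - 1)
    (hrel1 : ∀ k, k + 1 < d → e k * (y k + y (k+1)) = 0)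
    (ev : ℕ → ℂ) (k : ℕ) (hk : k + 1 < d)
    (hsum : ev k + ev (k+1) ≠ 0) :
    Submodule.map (s k * (y k - y (k+1)) + 1) (simGenEigenspace d y ev) ≤
      simGenEigenspace d y
        (fun j => if j = k then ev (k+1) else if j = k + 1 then ev k else ev j) ∧
    ((ev k - ev (k+1)) ^ 2 ≠ 1 →
      Submodule.map (s k * (y k - y (k+1)) + 1) (simGenEigenspace d y ev) =
        simGenEigenspace d y
          (fun j => if j = k then ev (k+1) else if j = k + 1 then ev k else ev j) ∧
      ∀ m ∈ simGenEigenspace d y ev,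
        (s k * (y k - y (k+1)) + 1) m = 0 → m = 0) := by
  have hk0 : k < d := by omega
  have hswap : (fun j => if j = k then ev (k + 1) else if j = k + 1 then ev k else ev j) =
      ev ∘ Equiv.swap k (k + 1) := by
    funext j
    simp only [Function.comp_apply, Equiv.swap_apply_def]
    split_ifs <;> rfl
  have hswap2 : ev ∘ Equiv.swap k (k + 1) ∘ Equiv.swap k (k + 1) = ev :=
    funext fun j => congrArg ev (Equiv.swap_apply_self k (k + 1) j)
  have hψ : s k * (y k - y (k + 1)) + 1 = VW.psi (s k) (y k) (y (k + 1)) := rfl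
  rw [hswap, hψ]
  have hmaps {c : ℕ → ℂ} (hc : c k + c (k + 1) ≠ 0) :=
    VW.mapsTo_psi hcomm hk (hsy k · hk) (hvw7 k hk) (hvw7' k hk) (hrel1 k hk) hc
  have hψψ {c : ℕ → ℂ} (hc : c k + c (k + 1) ≠ 0) {x : M} (hx : x ∈ simGenEigenspace d y c) :=
    VW.psi_psi_apply hcomm hk (hs2 k hk) (hvw7 k hk) (hvw7' k hk) (hrel1 k hk) hc hx
  refine ⟨Submodule.map_le_iff_le_comap.2 (hmaps hsum), fun hδ => ⟨?_, fun m hm hψm => ?_⟩⟩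
  · refine le_antisymm (Submodule.map_le_iff_le_comap.2 (hmaps hsum)) fun w hw => ?_
    have hsum' : (ev ∘ Equiv.swap k (k + 1)) k + (ev ∘ Equiv.swap k (k + 1)) (k + 1) ≠ 0 := by
      simpa [add_comm] using hsum
    have hδ' : ((ev ∘ Equiv.swap k (k + 1)) k - (ev ∘ Equiv.swap k (k + 1)) (k + 1)) ^ 2 ≠ 1 := by
      simp only [Function.comp_apply, Equiv.swap_apply_left, Equiv.swap_apply_right]
      rwa [← neg_sub, neg_sq]
    obtain ⟨u, hu, rfl⟩ := exists_mem_simGenEigenspace_one_sub_sq_apply_eq hcomm hk0 hk hδ' hw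
    exact ⟨_, by simpa only [Function.comp_assoc, hswap2] using hmaps hsum' hu, hψψ hsum' hu⟩
  · exact eq_zero_of_one_sub_sq_apply_eq_zero hcomm hk0 hk hδ hm <| by
      rw [← hψψ hsum hm, hψm, map_zero]

/-- Let `M` be a finite-dimensional module over the VW-algebra
with generalized eigenspace decomposition `M = ⊕ M_𝐢` for `y 1, …, y d`, and set
`ψ k = s k (y k - y (k+1)) + 1`.  If `𝐢 k + 𝐢 (k+1) ≠ 0` then
`ψ k M_𝐢 ⊆ M_{s_k 𝐢}` where `s_k 𝐢` swaps entries `k` and `k+1` of `𝐢`.  If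
moreover `(𝐢 k - 𝐢 (k+1))² ≠ 1` (i.e. `|𝐢_k - 𝐢_{k+1}| ≠ 1`), then `ψ k`
restricts to a linear isomorphism `M_𝐢 ≅ M_{s_k 𝐢}`. -/
theorem statement4 (M : Type*) [AddCommGroup M] [Module ℂ M] [FiniteDimensional ℂ M]
    (d : ℕ) (y e s : ℕ → Module.End ℂ M)
    (hcomm : ∀ j j', j < d → j' < d → Commute (y j) (y j'))
    (hs2 : ∀ k, k + 1 < d → s k * s k = 1)
    (hsy : ∀ k j, k + 1 < d → j < d → j ≠ k → j ≠ k + 1 → s k * y j = y j * s k)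
    (hvw7 : ∀ k, k + 1 < d → s k * y k - y (k+1) * s k = e k - 1)
    (hvw7' : ∀ k, k + 1 < d → y k * s k - s k * y (k+1) = e k - 1)
    (hrel1 : ∀ k, k + 1 < d → e k * (y k + y (k+1)) = 0)
    (hrel2 : ∀ k, k + 1 < d → (y k + y (k+1)) * e k = 0)
    (hdecomp : (⨆ c : ℕ → ℂ, simGenEigenspace d y c) = ⊤)
    (ev : ℕ → ℂ) (k : ℕ) (hk : k + 1 < d)
    (hsum : ev k + ev (k+1) ≠ 0) :
    Submodule.map (s k * (y k - y (k+1)) + 1) (simGenEigenspace d y ev) ≤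
      simGenEigenspace d y
        (fun j => if j = k then ev (k+1) else if j = k + 1 then ev k else ev j) ∧
    ((ev k - ev (k+1)) ^ 2 ≠ 1 →
      Submodule.map (s k * (y k - y (k+1)) + 1) (simGenEigenspace d y ev) =
        simGenEigenspace d y
          (fun j => if j = k then ev (k+1) else if j = k + 1 then ev k else ev j) ∧
      ∀ m ∈ simGenEigenspace d y ev,
        (s k * (y k - y (k+1)) + 1) m = 0 → m = 0) :=
  statement4_general M d y e s hcomm hs2 hsy hvw7 hvw7' hrel1 ev k hk hsum
end

section
/- With notation as above, if 𝐢_k + 𝐢_{k+1} ≠ 0, |𝐢_k - 𝐢_{k+1}| ≠ 1, and c = 𝐢_k - 𝐢_{k+1}, then as an endomorphism of the generalized eigenspace M_𝐢, ψ_k² = 1 - c² - z for some nilpotent endomorphism z; in particular ψ_k² is invertible on M_𝐢 since c² ≠ 1. -/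
/-!
On `M_𝐢` every `y_j - 𝐢_j` is nilpotent and the `y_j` commute, so `Y = y_k + y_{k+1}` is
invertible there (its only eigenvalue `𝐢_k + 𝐢_{k+1}` is nonzero), while `U = y_k - y_{k+1}` is
`c` plus a nilpotent. The VW relations give `s_k Y = Y s_k` and `ψ_k² = 1 - U² + 2 e_k s_k U`.
As `e_k s_k Y = e_k Y s_k = 0` and `Y` maps `M_𝐢` onto itself, `e_k s_k` kills `M_𝐢`, so there
`ψ_k² = 1 - c² - z` with `z = U² - c² = (U - c)(U + c)` nilpotent; since `1 - c² ≠ 0`, it is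
invertible. These arguments run in `End(M_𝐢)`, the target of the restriction algebra map from the
endomorphisms of `M` that preserve `M_𝐢`.
-/

namespace Submodule

variable {R M : Type*} [CommSemiring R] [AddCommMonoid M] [Module R M] (p : Submodule R M)

def invtSubalgebra : Subalgebra R (Module.End R M) where
  carrier := {f | ∀ x ∈ p, f x ∈ p}
  mul_mem' hf hg x hx := hf _ (hg x hx)
  add_mem' hf hg x hx := p.add_mem (hf x hx) (hg x hx)
  algebraMap_mem' r _ hx := p.smul_mem r hx

def restrictAlgHom : p.invtSubalgebra →ₐ[R] Module.End R p where
  toFun f := (f : Module.End R M).restrict f.2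
  map_one' := rfl
  map_mul' _ _ := rfl
  map_zero' := rfl
  map_add' _ _ := rfl
  commutes' _ := rfl

variable {p}

theorem exists_pow_apply_eq_zero_of_isNilpotent {f : p.invtSubalgebra}
    (hf : IsNilpotent (p.restrictAlgHom f)) :
    ∃ N : ℕ, ∀ m ∈ p, ((f : Module.End R M) ^ N) m = 0 := by
  obtain ⟨N, hN⟩ := hf
  refine ⟨N, fun m hm => ?_⟩
  rw [← map_pow] at hN
  rw [← Subalgebra.coe_pow]
  exact congrArg Subtype.val (LinearMap.congr_fun hN ⟨m, hm⟩)

theorem eq_zero_of_isUnit_of_apply_eq_zero {f : p.invtSubalgebra}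
    (hf : IsUnit (p.restrictAlgHom f)) {m : M} (hm : m ∈ p) (h : (f : Module.End R M) m = 0) :
    m = 0 := by
  have hinj := ((Module.End.isUnit_iff _).1 hf).1
  have hm0 : p.restrictAlgHom f ⟨m, hm⟩ = 0 := Subtype.ext h
  exact congrArg Subtype.val ((map_eq_zero_iff _ hinj).1 hm0)

theorem exists_mem_apply_eq_of_isUnit {f : p.invtSubalgebra}
    (hf : IsUnit (p.restrictAlgHom f)) {m : M} (hm : m ∈ p) :
    ∃ m' ∈ p, (f : Module.End R M) m' = m := by
  obtain ⟨m', hm'⟩ := ((Module.End.isUnit_iff _).1 hf).2 ⟨m, hm⟩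
  exact ⟨m', m'.2, congrArg Subtype.val hm'⟩

theorem apply_eq_zero_of_mul_eq_zero {f : p.invtSubalgebra}
    (hf : IsUnit (p.restrictAlgHom f)) {g : Module.End R M} (hg : g * f = 0) {m : M}
    (hm : m ∈ p) : g m = 0 := by
  obtain ⟨m', -, rfl⟩ := exists_mem_apply_eq_of_isUnit hf hm
  rw [← Module.End.mul_apply, hg, LinearMap.zero_apply]

end Submodule

section NilpotentPerturbation

variable {K A : Type*} [Field K] [Ring A] [Algebra K A]

open Algebra

theorem isUnit_of_isNilpotent_sub_algebraMap {x : A} {μ : K} (hμ : μ ≠ 0)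
    (hx : IsNilpotent (x - algebraMap K A μ)) : IsUnit x := by
  simpa using hx.isUnit_add_left_of_commute ((Ne.isUnit hμ).map (algebraMap K A))
    (commute_algebraMap_right μ _)

variable {x₁ x₂ : A} {μ₁ μ₂ : K}

theorem Commute.sub_algebraMap_sub_algebraMap (hx : Commute x₁ x₂) :
    Commute (x₁ - algebraMap K A μ₁) (x₂ - algebraMap K A μ₂) :=
  (hx.sub_right (commute_algebraMap_right μ₂ x₁)).sub_left (commute_algebraMap_left μ₁ _)

theorem Commute.isUnit_add_of_isNilpotent_sub (hx : Commute x₁ x₂)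
    (h₁ : IsNilpotent (x₁ - algebraMap K A μ₁)) (h₂ : IsNilpotent (x₂ - algebraMap K A μ₂))
    (hμ : μ₁ + μ₂ ≠ 0) : IsUnit (x₁ + x₂) := by
  refine isUnit_of_isNilpotent_sub_algebraMap hμ ?_
  simpa [add_sub_add_comm] using hx.sub_algebraMap_sub_algebraMap.isNilpotent_add h₁ h₂

theorem Commute.isNilpotent_sq_sub_algebraMap_sq (hx : Commute x₁ x₂)
    (h₁ : IsNilpotent (x₁ - algebraMap K A μ₁)) (h₂ : IsNilpotent (x₂ - algebraMap K A μ₂)) :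
    IsNilpotent ((x₁ - x₂) ^ 2 - algebraMap K A ((μ₁ - μ₂) ^ 2)) := by
  have hc : Commute (x₁ - x₂) (algebraMap K A (μ₁ - μ₂)) := commute_algebraMap_right _ _
  have hsub : IsNilpotent (x₁ - x₂ - algebraMap K A (μ₁ - μ₂)) := by
    simpa [sub_sub_sub_comm] using hx.sub_algebraMap_sub_algebraMap.isNilpotent_sub h₁ h₂
  rw [map_pow, hc.sq_sub_sq]
  exact (((Commute.refl _).sub_right hc).add_left (hc.symm.sub_right (Commute.refl _)))
    |>.isNilpotent_mul_left hsub

end NilpotentPerturbation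

section VW

-- `s * a - b * s = e - 1` and `a * s - s * b = e - 1` are the VW-algebra relations between
-- `s = s_k`, `e = e_k`, `a = y_k` and `b = y_{k+1}`.

variable {A : Type*} [Ring A] {s a b e : A}

theorem commute_add_of_vw (h : s * a - b * s = e - 1) (h' : a * s - s * b = e - 1) :
    Commute s (a + b) :=
  sub_eq_zero.1 <| by
    rw [show s * (a + b) - (a + b) * s = (s * a - b * s) - (a * s - s * b) by noncomm_ring, h, h',
      sub_self]

theorem mul_sub_of_vw (h : s * a - b * s = e - 1) (h' : a * s - s * b = e - 1) :
    s * (a - b) = -((a - b) * s) + 2 * (e - 1) :=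
  calc s * (a - b) = -((a - b) * s) + ((s * a - b * s) + (a * s - s * b)) := by noncomm_ring
    _ = -((a - b) * s) + 2 * (e - 1) := by rw [h, h', two_mul]

theorem sq_mul_sub_add_one_of_vw (hs : s * s = 1) (h : s * a - b * s = e - 1)
    (h' : a * s - s * b = e - 1) :
    (s * (a - b) + 1) ^ 2 = 1 - (a - b) ^ 2 + 2 * (e * s * (a - b)) := by
  set u := a - b
  calc (s * u + 1) ^ 2 = (s * u) * (s * u) + 2 * (s * u) + 1 := by noncomm_ring
    _ = (-(u * s) + 2 * (e - 1)) * (s * u) + 2 * (s * u) + 1 := by rw [← mul_sub_of_vw h h']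
    _ = -(u * (s * s) * u) + 2 * (e * s * u) + 1 := by noncomm_ring
    _ = 1 - u ^ 2 + 2 * (e * s * u) := by rw [hs]; noncomm_ring

end VW

theorem sq_mul_sub_add_one_apply_of_vw {R M : Type*} [CommRing R] [AddCommGroup M] [Module R M]
    {p : Submodule R M} {s e : Module.End R M} {f g : p.invtSubalgebra} (hs : s * s = 1)
    (h : s * f - g * s = e - 1) (h' : f * s - s * g = e - 1) (he : e * (f + g) = 0)
    (hfg : IsUnit (p.restrictAlgHom (f + g))) {m : M} (hm : m ∈ p) :
    ((s * (f - g) + 1) ^ 2 : Module.End R M) m = m - ((f - g : Module.End R M) ^ 2) m := by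
  have hes : ∀ m ∈ p, (e * s) m = 0 := fun m hm =>
    Submodule.apply_eq_zero_of_mul_eq_zero hfg
      (by rw [Subalgebra.coe_add, mul_assoc, (commute_add_of_vw h h').eq, ← mul_assoc, he,
        zero_mul]) hm
  have hu : ((f : Module.End R M) - g) m ∈ p := (f - g).2 m hm
  rw [sq_mul_sub_add_one_of_vw hs h h', LinearMap.add_apply, Module.End.mul_apply 2,
    Module.End.mul_apply (e * s), hes _ hu, map_zero, add_zero]
  simp

section SimGenEigenspace

variable {M : Type*} [AddCommGroup M] [Module ℂ M] {d : ℕ} {y : ℕ → Module.End ℂ M}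
  {ev : ℕ → ℂ}

theorem mem_invtSubalgebra_simGenEigenspace {f : Module.End ℂ M}
    (hf : ∀ j < d, Commute (y j) f) : f ∈ (simGenEigenspace d y ev).invtSubalgebra := by
  intro m hm
  simp only [simGenEigenspace, Submodule.mem_iInf] at hm ⊢
  exact fun j => Module.End.mapsTo_maxGenEigenspace_of_comm (hf j j.2) (ev j) (hm j)

theorem isNilpotent_restrictAlgHom_sub_simGenEigenspace [FiniteDimensional ℂ M] {j : ℕ}
    (hj : j < d) (hy : y j ∈ (simGenEigenspace d y ev).invtSubalgebra) :
    IsNilpotent ((simGenEigenspace d y ev).restrictAlgHom ⟨y j, hy⟩ -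
      algebraMap ℂ _ (ev j)) := by
  rw [← AlgHom.map_algebraMap (simGenEigenspace d y ev).restrictAlgHom, ← map_sub]
  exact Module.End.isNilpotent_restrict_of_le
    (hp := (⟨y j, hy⟩ - algebraMap ℂ _ (ev j) : (simGenEigenspace d y ev).invtSubalgebra).2)
    (iInf_le (fun i : Fin d => (y i).maxGenEigenspace (ev i)) ⟨j, hj⟩)
    ((y j).isNilpotent_restrict_maxGenEigenspace_sub_algebraMap (ev j))

end SimGenEigenspace

theorem statement5_general (M : Type*) [AddCommGroup M] [Module ℂ M] [FiniteDimensional ℂ M]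
    (d : ℕ) (y e s : ℕ → Module.End ℂ M)
    (hcomm : ∀ j j', j < d → j' < d → Commute (y j) (y j'))
    (hs2 : ∀ k, k + 1 < d → s k * s k = 1)
    (hvw7 : ∀ k, k + 1 < d → s k * y k - y (k+1) * s k = e k - 1)
    (hvw7' : ∀ k, k + 1 < d → y k * s k - s k * y (k+1) = e k - 1)
    (hrel1 : ∀ k, k + 1 < d → e k * (y k + y (k+1)) = 0)
    (ev : ℕ → ℂ) (k : ℕ) (hk : k + 1 < d)
    (hsum : ev k + ev (k+1) ≠ 0)
    (c : ℂ) (hc : c = ev k - ev (k+1)) (hc2 : c ^ 2 ≠ 1) :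
    ∃ z : Module.End ℂ M,
      (∀ m ∈ simGenEigenspace d y ev,
        (((s k * (y k - y (k+1)) + 1) ^ 2 : Module.End ℂ M)) m = (1 - c ^ 2) • m - z m) ∧
      (∀ m ∈ simGenEigenspace d y ev, z m ∈ simGenEigenspace d y ev) ∧
      (∃ N : ℕ, ∀ m ∈ simGenEigenspace d y ev, (z ^ N) m = 0) ∧
      (∀ m ∈ simGenEigenspace d y ev,
        (((s k * (y k - y (k+1)) + 1) ^ 2 : Module.End ℂ M)) m = 0 → m = 0) ∧
      (∀ m ∈ simGenEigenspace d y ev, ∃ m' ∈ simGenEigenspace d y ev,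
        (((s k * (y k - y (k+1)) + 1) ^ 2 : Module.End ℂ M)) m' = m) := by
  set p := simGenEigenspace d y ev
  set ρ := p.restrictAlgHom
  have hy : ∀ j < d, y j ∈ p.invtSubalgebra := fun j hj =>
    mem_invtSubalgebra_simGenEigenspace fun i hi => hcomm i j hi hj
  set y₁ : p.invtSubalgebra := ⟨y k, hy k (by omega)⟩
  set y₂ : p.invtSubalgebra := ⟨y (k+1), hy (k+1) hk⟩
  have h₁ := isNilpotent_restrictAlgHom_sub_simGenEigenspace (by omega) y₁.2
  have h₂ := isNilpotent_restrictAlgHom_sub_simGenEigenspace hk y₂.2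
  have h₁₂ : Commute (ρ y₁) (ρ y₂) :=
    (show Commute y₁ y₂ from Subtype.ext (hcomm k (k+1) (by omega) hk)).map ρ
  have hY : IsUnit (ρ (y₁ + y₂)) :=
    map_add ρ y₁ y₂ ▸ h₁₂.isUnit_add_of_isNilpotent_sub h₁ h₂ hsum
  set z : p.invtSubalgebra := (y₁ - y₂) ^ 2 - algebraMap ℂ _ (c ^ 2)
  have hz : IsNilpotent (ρ z) := by
    simpa [z, hc] using h₁₂.isNilpotent_sq_sub_algebraMap_sq h₁ h₂
  set w : p.invtSubalgebra := algebraMap ℂ _ (1 - c ^ 2) - z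
  have hw : IsUnit (ρ w) :=
    isUnit_of_isNilpotent_sub_algebraMap (sub_ne_zero.2 hc2.symm) (by simpa [w] using hz.neg)
  have hψ : ∀ m ∈ p, ((s k * (y k - y (k+1)) + 1) ^ 2 : Module.End ℂ M) m =
      (w : Module.End ℂ M) m := fun m hm =>
    (sq_mul_sub_add_one_apply_of_vw (hs2 k hk) (hvw7 k hk) (hvw7' k hk) (hrel1 k hk) hY hm).trans
      (by simp [w, z])
  obtain ⟨N, hN⟩ := Submodule.exists_pow_apply_eq_zero_of_isNilpotent hz
  refine ⟨z, fun m hm => (hψ m hm).trans ?_, fun m hm => z.2 m hm, ⟨N, hN⟩,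
    fun m hm h => Submodule.eq_zero_of_isUnit_of_apply_eq_zero hw hm (hψ m hm ▸ h),
    fun m hm => ?_⟩
  · simp only [w, Subalgebra.coe_sub, Subalgebra.coe_algebraMap, LinearMap.sub_apply,
      Module.algebraMap_end_apply]
  · obtain ⟨m', hm', rfl⟩ := Submodule.exists_mem_apply_eq_of_isUnit hw hm
    exact ⟨m', hm', hψ m' hm'⟩

/-- With notation as in the VW-algebra setting, if
`𝐢 k + 𝐢 (k+1) ≠ 0`, `(𝐢 k - 𝐢 (k+1))² ≠ 1` and `c = 𝐢 k - 𝐢 (k+1)`, then as an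
endomorphism of the generalized eigenspace `M_𝐢`, `ψ_k² = 1 - c² - z` for some
nilpotent endomorphism `z`; in particular `ψ_k²` is invertible on `M_𝐢` since
`c² ≠ 1`. -/
theorem statement5 (M : Type*) [AddCommGroup M] [Module ℂ M] [FiniteDimensional ℂ M]
    (d : ℕ) (y e s : ℕ → Module.End ℂ M)
    (hcomm : ∀ j j', j < d → j' < d → Commute (y j) (y j'))
    (hs2 : ∀ k, k + 1 < d → s k * s k = 1)
    (hsy : ∀ k j, k + 1 < d → j < d → j ≠ k → j ≠ k + 1 → s k * y j = y j * s k)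
    (hvw7 : ∀ k, k + 1 < d → s k * y k - y (k+1) * s k = e k - 1)
    (hvw7' : ∀ k, k + 1 < d → y k * s k - s k * y (k+1) = e k - 1)
    (hrel1 : ∀ k, k + 1 < d → e k * (y k + y (k+1)) = 0)
    (hrel2 : ∀ k, k + 1 < d → (y k + y (k+1)) * e k = 0)
    (hdecomp : (⨆ c : ℕ → ℂ, simGenEigenspace d y c) = ⊤)
    (ev : ℕ → ℂ) (k : ℕ) (hk : k + 1 < d)
    (hsum : ev k + ev (k+1) ≠ 0)
    (c : ℂ) (hc : c = ev k - ev (k+1)) (hc2 : c ^ 2 ≠ 1) :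
    ∃ z : Module.End ℂ M,
      (∀ m ∈ simGenEigenspace d y ev,
        (((s k * (y k - y (k+1)) + 1) ^ 2 : Module.End ℂ M)) m = (1 - c ^ 2) • m - z m) ∧
      (∀ m ∈ simGenEigenspace d y ev, z m ∈ simGenEigenspace d y ev) ∧
      (∃ N : ℕ, ∀ m ∈ simGenEigenspace d y ev, (z ^ N) m = 0) ∧
      (∀ m ∈ simGenEigenspace d y ev,
        (((s k * (y k - y (k+1)) + 1) ^ 2 : Module.End ℂ M)) m = 0 → m = 0) ∧
      (∀ m ∈ simGenEigenspace d y ev, ∃ m' ∈ simGenEigenspace d y ev,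
        (((s k * (y k - y (k+1)) + 1) ^ 2 : Module.End ℂ M)) m' = m) :=
  statement5_general M d y e s hcomm hs2 hvw7 hvw7' hrel1 ev k hk hsum c hc hc2
end
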